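/- For every integer d ≥ 1 there is a constant B > 0 such that for all n ≥ 1: if u, v ∈ A_d ⊆ Γ_d are conjugate in Γ_d and max{d(1,u), d(1,v)} ≤ n, then there exists g ∈ Γ_d with g⁻¹ u g = v and d(1,g) ≤ B · n^d. -/

import Mathlib

namespace ModelFiliform

/-- The "down-shift" endomorphism `N` of `ℤ^d`: `(N x) j = x (j-1)` for `j ≥ 1`, `(N x) 0 = 0`.
The automorphism `φ` of the model filiform group is `1 + N`. -/
def shiftMap (d : ℕ) : (Fin d → ℤ) →ₗ[ℤ] (Fin d → ℤ) where
  toFun x := fun j =>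
    if _h : 1 ≤ (j : ℕ) then x ⟨(j : ℕ) - 1, lt_of_le_of_lt (Nat.sub_le _ _) j.isLt⟩ else 0
  map_add' x y := by funext j; by_cases h : 1 ≤ (j : ℕ) <;> simp [h]
  map_smul' c x := by funext j; by_cases h : 1 ≤ (j : ℕ) <;> simp [h]

theorem shiftMap_apply (d : ℕ) (x : Fin d → ℤ) (j : Fin d) :
    shiftMap d x j =
      if _h : 1 ≤ (j : ℕ) then x ⟨(j : ℕ) - 1, lt_of_le_of_lt (Nat.sub_le _ _) j.isLt⟩ else 0 :=
  rfl

theorem shiftMap_pow_apply (d k : ℕ) (x : Fin d → ℤ) (j : Fin d) :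
    ((shiftMap d ^ k) x) j =
      if _h : k ≤ (j : ℕ) then x ⟨(j : ℕ) - k, lt_of_le_of_lt (Nat.sub_le _ _) j.isLt⟩
      else 0 := by
  induction k generalizing x with
  | zero => simp
  | succ k ih =>
      rw [pow_succ, Module.End.mul_apply, ih]
      by_cases h1 : k ≤ (j : ℕ)
      · rw [dif_pos h1, shiftMap_apply]
        by_cases h2 : k + 1 ≤ (j : ℕ)
        · rw [dif_pos (show 1 ≤ (j : ℕ) - k by omega), dif_pos h2]
          have hab : (j : ℕ) - k - 1 = (j : ℕ) - (k + 1) := by omega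
          simp only [hab]
        · rw [dif_neg (show ¬ 1 ≤ (j : ℕ) - k by omega), dif_neg h2]
      · rw [dif_neg h1, dif_neg (by omega)]

theorem shiftMap_nilpotent (d : ℕ) : IsNilpotent (shiftMap d) := by
  refine ⟨d, ?_⟩
  apply LinearMap.ext
  intro x
  funext j
  rw [shiftMap_pow_apply, dif_neg (by omega)]
  rfl

/-- `φ = 1 + N` as a unit of the endomorphism ring of `ℤ^d`. -/
noncomputable def phiUnit (d : ℕ) : (Module.End ℤ (Fin d → ℤ))ˣ :=
  ((shiftMap_nilpotent d).isUnit_one_add).unit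

/-- The automorphism `φ` of `ℤ^d`: writing `ℤ^d` multiplicatively with basis `a_1, …, a_d`
(where `a_{i+1}` is the `i`-th standard basis vector, `i : Fin d`), it fixes `a_d` and sends
`a_i ↦ a_i a_{i+1}` for `1 ≤ i < d`. -/
noncomputable def phi (d : ℕ) : (Fin d → ℤ) ≃ₗ[ℤ] (Fin d → ℤ) :=
  LinearMap.GeneralLinearGroup.generalLinearEquiv ℤ _ (phiUnit d)

/-- `φ` as a multiplicative automorphism of `Multiplicative ℤ^d`. -/
noncomputable def phiAut (d : ℕ) : MulAut (Multiplicative (Fin d → ℤ)) :=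
  AddEquiv.toMultiplicative (phi d).toAddEquiv

/-- The action of `ℤ` on `ℤ^d` defining `Γ_d = ℤ^d ⋊_φ ℤ`: the generator `t` acts by
`t x t⁻¹ = φ⁻¹(x)`, so that `t⁻¹ a_i t = φ(a_i)`, i.e. `t⁻¹ a_i t = a_i a_{i+1}` for
`1 ≤ i < d` and `t⁻¹ a_d t = a_d`. -/
noncomputable def act (d : ℕ) : Multiplicative ℤ →* MulAut (Multiplicative (Fin d → ℤ)) :=
  zpowersHom _ (phiAut d)⁻¹

/-- The discrete model filiform group `Γ_d = ℤ^d ⋊_φ ℤ`. -/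
abbrev Gamma (d : ℕ) : Type :=
  SemidirectProduct (Multiplicative (Fin d → ℤ)) (Multiplicative ℤ) (act d)

/-- The generator `t` of `Γ_d`. -/
noncomputable def tGen (d : ℕ) : Gamma d :=
  SemidirectProduct.inr (Multiplicative.ofAdd (1 : ℤ))

/-- The generators `a_1, …, a_d` of `Γ_d`: here `aGen d i` is `a_{i+1}` (as `i : Fin d` is
0-indexed), so `a_1 = aGen d ⟨0, _⟩` and `a_d = aGen d ⟨d-1, _⟩`. -/
noncomputable def aGen (d : ℕ) (i : Fin d) : Gamma d :=
  SemidirectProduct.inl (Multiplicative.ofAdd (Pi.single i (1 : ℤ)))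

/-- The standard generating set `{a_1, …, a_d, t}` of `Γ_d`. -/
noncomputable def gens (d : ℕ) : Set (Gamma d) := insert (tGen d) (Set.range (aGen d))

/-- The word length `d(1,g)` of `g ∈ Γ_d` with respect to the standard generators: the least
`n` such that `g` is a product of `n` elements of `{a_1^{±1}, …, a_d^{±1}, t^{±1}}`. -/
noncomputable def wl (d : ℕ) (g : Gamma d) : ℕ :=
  sInf {n | ∃ l : List (Gamma d), l.length = n ∧
    (∀ x ∈ l, x ∈ gens d ∨ x⁻¹ ∈ gens d) ∧ l.prod = g}

/-- The subgroup `A_d = ℤ^d ⋊ 1 = ⟨a_1, …, a_d⟩` of `Γ_d`. -/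
noncomputable def A (d : ℕ) : Subgroup (Gamma d) := Subgroup.closure (Set.range (aGen d))

open SemidirectProduct Multiplicative

-- new material
/-- `φ` as a plain function. -/
def phiFun (d : ℕ) (z : Fin d → ℤ) : Fin d → ℤ := z + shiftMap d z

theorem phi_apply (d : ℕ) (z : Fin d → ℤ) : phi d z = phiFun d z := by
  have h1 : ⇑(phi d) = ⇑((phiUnit d : Module.End ℤ (Fin d → ℤ))) :=
    LinearMap.GeneralLinearGroup.coeFn_generalLinearEquiv (phiUnit d)
  have h2 : ((phiUnit d : Module.End ℤ (Fin d → ℤ))) = 1 + shiftMap d :=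
    IsUnit.unit_spec _
  rw [h1, h2]
  simp [phiFun]

theorem phiAut_apply (d : ℕ) (z : Fin d → ℤ) :
    phiAut d (Multiplicative.ofAdd z) = Multiplicative.ofAdd (phiFun d z) := by
  show Multiplicative.ofAdd (phi d z) = _
  rw [phi_apply]

/-- `act` at `ofAdd m`, additively. -/
noncomputable def actA (d : ℕ) (m : ℤ) (z : Fin d → ℤ) : Fin d → ℤ :=
  Multiplicative.toAdd (act d (Multiplicative.ofAdd m) (Multiplicative.ofAdd z))

theorem actA_zero (d : ℕ) (z : Fin d → ℤ) : actA d 0 z = z := by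
  simp [actA, act]

theorem actA_add (d : ℕ) (a b : ℤ) (z : Fin d → ℤ) :
    actA d (a + b) z = actA d a (actA d b z) := by
  simp only [actA]
  rw [show Multiplicative.ofAdd (a+b) = Multiplicative.ofAdd a * Multiplicative.ofAdd b from rfl,
    map_mul]
  simp

theorem actA_neg_one (d : ℕ) (z : Fin d → ℤ) : actA d (-1) z = phiFun d z := by
  simp only [actA, act, zpowersHom_apply]
  rw [show Multiplicative.toAdd (Multiplicative.ofAdd (-1 : ℤ)) = -1 from rfl]
  rw [zpow_neg_one, inv_inv]
  rw [phiAut_apply]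
  simp

theorem phiFun_actA_one (d : ℕ) (z : Fin d → ℤ) : phiFun d (actA d 1 z) = z := by
  have := actA_add d (-1) 1 z
  rw [neg_add_cancel, actA_zero, actA_neg_one] at this
  exact this.symm

theorem phiFun_injective (d : ℕ) : Function.Injective (phiFun d) := by
  intro a b h
  have : phiAut d (Multiplicative.ofAdd a) = phiAut d (Multiplicative.ofAdd b) := by
    rw [phiAut_apply, phiAut_apply, h]
  simpa using (phiAut d).injective this

/-- `ℕ`-indexed coordinates, `0` out of range. -/
def coordFun (d : ℕ) (z : Fin d → ℤ) (k : ℕ) : ℤ := if h : k < d then z ⟨k, h⟩ else 0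

theorem coordFun_phiFun (d : ℕ) (z : Fin d → ℤ) (k : ℕ) (hk : k < d) :
    coordFun d (phiFun d z) k =
      coordFun d z k + (if 1 ≤ k then coordFun d z (k - 1) else 0) := by
  simp only [coordFun, dif_pos hk]
  rw [show phiFun d z ⟨k, hk⟩ = z ⟨k, hk⟩ + shiftMap d z ⟨k, hk⟩ from rfl, shiftMap_apply]
  by_cases h : 1 ≤ k
  · rw [dif_pos h, if_pos h, dif_pos (by omega : k - 1 < d)]
  · rw [dif_neg h, if_neg h]

theorem phiFun_Q (d j0 : ℕ) (h1 : j0 + 1 < d) (z : Fin d → ℤ) (c e : ℤ)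
    (h0 : ∀ k < j0, coordFun d z k = 0)
    (hc : coordFun d z j0 = c) (he : coordFun d z (j0 + 1) = e) :
    (∀ k < j0, coordFun d (phiFun d z) k = 0) ∧
      coordFun d (phiFun d z) j0 = c ∧ coordFun d (phiFun d z) (j0 + 1) = e + c := by
  refine ⟨fun k hk => ?_, ?_, ?_⟩
  · rw [coordFun_phiFun d z k (by omega), h0 k hk]
    by_cases h : 1 ≤ k
    · rw [if_pos h, h0 (k - 1) (by omega)]; ring
    · rw [if_neg h]; ring
  · rw [coordFun_phiFun d z j0 (by omega), hc]
    by_cases h : 1 ≤ j0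
    · rw [if_pos h, h0 (j0 - 1) (by omega)]; ring
    · rw [if_neg h]; ring
  · rw [coordFun_phiFun d z (j0 + 1) h1, if_pos (by omega), Nat.add_sub_cancel, hc, he]

theorem phiFun_Q_inv (d j0 : ℕ) (h1 : j0 + 1 < d) (w z : Fin d → ℤ) (c e : ℤ)
    (hw : phiFun d w = z)
    (h0 : ∀ k < j0, coordFun d z k = 0)
    (hc : coordFun d z j0 = c) (he : coordFun d z (j0 + 1) = e) :
    (∀ k < j0, coordFun d w k = 0) ∧
      coordFun d w j0 = c ∧ coordFun d w (j0 + 1) = e - c := by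
  have hrec : ∀ k < d, coordFun d z k =
      coordFun d w k + (if 1 ≤ k then coordFun d w (k - 1) else 0) := by
    intro k hk; rw [← hw, coordFun_phiFun d w k hk]
  have key : ∀ k, k < j0 → coordFun d w k = 0 := by
    intro k
    induction k with
    | zero => intro hk; have h2 := hrec 0 (by omega); rw [if_neg (by omega), h0 0 hk] at h2; linarith
    | succ k ih =>
        intro hk
        have h2 := hrec (k + 1) (by omega)
        rw [if_pos (by omega), Nat.add_sub_cancel, ih (by omega), h0 (k + 1) hk] at h2
        linarith
  have hwj0 : coordFun d w j0 = c := by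
    have h2 := hrec j0 (by omega)
    by_cases h : 1 ≤ j0
    · rw [if_pos h, key (j0 - 1) (by omega), hc] at h2; linarith
    · rw [if_neg h, hc] at h2; linarith
  refine ⟨key, hwj0, ?_⟩
  have h2 := hrec (j0 + 1) h1
  rw [if_pos (by omega), Nat.add_sub_cancel, hwj0, he] at h2
  linarith

theorem actA_Q (d j0 : ℕ) (h1 : j0 + 1 < d) (x : Fin d → ℤ)
    (h0 : ∀ k < j0, coordFun d x k = 0) (m : ℤ) :
    (∀ k < j0, coordFun d (actA d m x) k = 0) ∧
      coordFun d (actA d m x) j0 = coordFun d x j0 ∧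
      coordFun d (actA d m x) (j0 + 1) = coordFun d x (j0 + 1) - m * coordFun d x j0 := by
  induction m using Int.induction_on with
  | zero => rw [actA_zero]; exact ⟨h0, rfl, by ring_nf⟩
  | succ k ih =>
      have hcomp : phiFun d (actA d ((k : ℤ) + 1) x) = actA d k x := by
        have := actA_add d (-1) ((k : ℤ) + 1) x
        rw [show (-1 : ℤ) + ((k : ℤ) + 1) = k by ring, actA_neg_one] at this
        exact this.symm
      obtain ⟨q0, qc, qe⟩ := phiFun_Q_inv d j0 h1 _ _ _ _ hcomp ih.1 ih.2.1 ih.2.2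
      exact ⟨q0, qc, by rw [qe]; ring⟩
  | pred k ih =>
      have hcomp : actA d (-(k : ℤ) - 1) x = phiFun d (actA d (-(k : ℤ)) x) := by
        have := actA_add d (-1) (-(k : ℤ)) x
        rw [show (-1 : ℤ) + (-(k : ℤ)) = -(k : ℤ) - 1 by ring, actA_neg_one] at this
        exact this
      obtain ⟨q0, qc, qe⟩ := phiFun_Q d j0 h1 _ _ _ ih.1 ih.2.1 ih.2.2
      rw [hcomp]
      exact ⟨q0, qc, by rw [qe]; ring⟩

theorem actA_fixed (d : ℕ) (x : Fin d → ℤ) (hx : phiFun d x = x) (m : ℤ) :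
    actA d m x = x := by
  induction m using Int.induction_on with
  | zero => exact actA_zero d x
  | succ k ih =>
      have hcomp : phiFun d (actA d ((k : ℤ) + 1) x) = actA d k x := by
        have := actA_add d (-1) ((k : ℤ) + 1) x
        rw [show (-1 : ℤ) + ((k : ℤ) + 1) = k by ring, actA_neg_one] at this
        exact this.symm
      apply phiFun_injective d
      rw [hcomp, ih, hx]
  | pred k ih =>
      have hcomp : actA d (-(k : ℤ) - 1) x = phiFun d (actA d (-(k : ℤ)) x) := by
        have := actA_add d (-1) (-(k : ℤ)) x
        rw [show (-1 : ℤ) + (-(k : ℤ)) = -(k : ℤ) - 1 by ring, actA_neg_one] at this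
        exact this
      rw [hcomp, ih, hx]

open SemidirectProduct Multiplicative

/-- Coordinates of the left part of a group element. -/
noncomputable def lc (d : ℕ) (g : Gamma d) (k : ℕ) : ℤ := coordFun d (toAdd g.left) k

theorem inv_coord_bound (d : ℕ) (C : ℤ) (hC : 0 ≤ C) (w z : Fin d → ℤ)
    (hw : phiFun d w = z) (hz : ∀ k : ℕ, |coordFun d z k| ≤ C * (C + 1) ^ k) :
    ∀ k : ℕ, |coordFun d w k| ≤ (C + 1) ^ (k + 1) - 1 := by
  have hrec : ∀ k < d, coordFun d z k =
      coordFun d w k + (if 1 ≤ k then coordFun d w (k - 1) else 0) := by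
    intro k hk; rw [← hw, coordFun_phiFun d w k hk]
  intro k
  induction k with
  | zero =>
      by_cases hk : 0 < d
      · have h2 := hrec 0 hk
        rw [if_neg (by omega)] at h2
        have h3 := hz 0
        simp only [pow_zero, mul_one] at h3
        have h4 : |coordFun d w 0| ≤ C := by
          rw [show coordFun d w 0 = coordFun d z 0 by omega]; simpa using h3
        have h5 : (C + 1 : ℤ) ^ (0 + 1) = C + 1 := by norm_num
        linarith
      · rw [show coordFun d w 0 = 0 from dif_neg (by omega)]
        have h5 : (C + 1 : ℤ) ^ (0 + 1) = C + 1 := by norm_num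
        rw [abs_zero]
        linarith
  | succ k ih =>
      have hpow : (1 : ℤ) ≤ (C + 1) ^ (k + 1) := one_le_pow₀ (by linarith)
      by_cases hk : k + 1 < d
      · have h2 := hrec (k + 1) hk
        rw [if_pos (by omega), Nat.add_sub_cancel] at h2
        have h3 := hz (k + 1)
        have : |coordFun d w (k + 1)| ≤ |coordFun d z (k + 1)| + |coordFun d w k| := by
          rw [show coordFun d w (k+1) = coordFun d z (k+1) - coordFun d w k by linarith]
          exact abs_sub (coordFun d z (k+1)) (coordFun d w k)
        have hstep : C * (C + 1) ^ (k + 1) + ((C + 1) ^ (k + 1) - 1) =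
            (C + 1) ^ (k + 1 + 1) - 1 := by ring
        linarith
      · rw [show coordFun d w (k + 1) = 0 from dif_neg (by omega)]
        have : (1:ℤ) ≤ (C + 1) ^ (k + 1 + 1) := one_le_pow₀ (by linarith)
        simp only [abs_zero]
        linarith

theorem tGen_left (d : ℕ) : (tGen d).left = 1 := rfl
theorem tGen_right (d : ℕ) : (tGen d).right = ofAdd 1 := rfl

theorem act_toAdd (d : ℕ) (s : Multiplicative ℤ) (y : Multiplicative (Fin d → ℤ)) :
    toAdd (act d s y) = actA d (toAdd s) (toAdd y) := by
  simp [actA]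

/-- single coordinate bound for `Pi.single`. -/
theorem coordFun_single (d : ℕ) (i : Fin d) (c : ℤ) (k : ℕ) :
    |coordFun d (Pi.single i c) k| ≤ |c| := by
  unfold coordFun
  by_cases h : k < d
  · rw [dif_pos h]
    by_cases he : (⟨k, h⟩ : Fin d) = i
    · rw [he, Pi.single_eq_same]
    · rw [Pi.single_eq_of_ne he]; simp [abs_nonneg]
  · rw [dif_neg h]; simp [abs_nonneg]


theorem coordFun_add (d : ℕ) (y z : Fin d → ℤ) (k : ℕ) :
    coordFun d (y + z) k = coordFun d y k + coordFun d z k := by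
  unfold coordFun
  by_cases h : k < d
  · simp [dif_pos h]
  · simp [dif_neg h]

theorem bound_id (d : ℕ) (L : ℤ) (hL : 0 ≤ L) (z : Fin d → ℤ)
    (hz : ∀ k : ℕ, |coordFun d z k| ≤ L * (L + 1) ^ k) (c : ℤ) (hc : |c| ≤ 1) (i : Fin d) :
    ∀ k : ℕ, |coordFun d (z + Pi.single i c) k| ≤ (L + 1) * (L + 2) ^ k := by
  intro k
  rw [coordFun_add]
  have h1 := hz k
  have h2 : |coordFun d (Pi.single i c) k| ≤ |c| := coordFun_single d i c k
  have h3 : (L + 1) ^ k ≤ (L + 2) ^ k := pow_le_pow_left₀ (by linarith) (by linarith) k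
  have h4 : (1 : ℤ) ≤ (L + 1) ^ k := one_le_pow₀ (by linarith)
  calc |coordFun d z k + coordFun d (Pi.single i c) k|
      ≤ |coordFun d z k| + |coordFun d (Pi.single i c) k| := abs_add_le _ _
    _ ≤ L * (L + 1) ^ k + 1 := by linarith
    _ ≤ (L + 1) * (L + 1) ^ k := by linarith
    _ ≤ (L + 1) * (L + 2) ^ k := by nlinarith

theorem bound_phi (d : ℕ) (L : ℤ) (hL : 0 ≤ L) (z : Fin d → ℤ)
    (hz : ∀ k : ℕ, |coordFun d z k| ≤ L * (L + 1) ^ k) :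
    ∀ k : ℕ, |coordFun d (phiFun d z) k| ≤ (L + 1) * (L + 2) ^ k := by
  intro k
  have hpos : (0 : ℤ) ≤ (L + 1) * (L + 2) ^ k := by positivity
  by_cases hk : k < d
  · rw [coordFun_phiFun d z k hk]
    by_cases h1 : 1 ≤ k
    · rw [if_pos h1]
      obtain ⟨k', rfl⟩ : ∃ k', k = k' + 1 := ⟨k - 1, by omega⟩
      rw [Nat.add_sub_cancel]
      have e1 := hz (k' + 1)
      have e2 := hz k'
      have h3 : (L + 1) ^ (k' + 1) ≤ (L + 2) ^ (k' + 1) :=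
        pow_le_pow_left₀ (by linarith) (by linarith) _
      have h4 : (0 : ℤ) ≤ (L + 1) ^ k' := by positivity
      calc |coordFun d z (k' + 1) + coordFun d z k'|
          ≤ |coordFun d z (k' + 1)| + |coordFun d z k'| := abs_add_le _ _
        _ ≤ L * (L + 1) ^ (k' + 1) + L * (L + 1) ^ k' := by linarith
        _ ≤ (L + 1) * (L + 1) ^ (k' + 1) := by
              have hx : (L + 1) ^ (k' + 1) = (L + 1) ^ k' * (L + 1) := pow_succ _ _
              nlinarith [h4, hx]
        _ ≤ (L + 1) * (L + 2) ^ (k' + 1) := by nlinarith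
    · rw [if_neg h1]
      have e1 := hz k
      have h4 : (1 : ℤ) ≤ (L + 1) ^ k := one_le_pow₀ (by linarith)
      have h3 : (L + 1) ^ k ≤ (L + 2) ^ k := pow_le_pow_left₀ (by linarith) (by linarith) k
      rw [add_zero]
      nlinarith
  · rw [show coordFun d (phiFun d z) k = 0 from dif_neg hk, abs_zero]
    exact hpos

theorem bound_phi_inv (d : ℕ) (L : ℤ) (hL : 0 ≤ L) (z : Fin d → ℤ)
    (hz : ∀ k : ℕ, |coordFun d z k| ≤ L * (L + 1) ^ k) :
    ∀ k : ℕ, |coordFun d (actA d 1 z) k| ≤ (L + 1) * (L + 2) ^ k := by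
  intro k
  have h1 := inv_coord_bound d L hL (actA d 1 z) z (phiFun_actA_one d z) hz k
  have h3 : (L + 1) ^ k ≤ (L + 2) ^ k := pow_le_pow_left₀ (by linarith) (by linarith) k
  have h5 : (L + 1) ^ (k + 1) = (L + 1) * (L + 1) ^ k := by ring
  nlinarith

theorem word_bound (d : ℕ) (l : List (Gamma d))
    (hl : ∀ g ∈ l, g ∈ gens d ∨ g⁻¹ ∈ gens d) :
    ∀ k : ℕ, |lc d l.prod k| ≤ (l.length : ℤ) * ((l.length : ℤ) + 1) ^ k := by
  induction l with
  | nil => intro k; simp [lc, coordFun]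
  | cons h t iht =>
      have ih := iht (fun g hg => hl g (List.mem_cons_of_mem h hg))
      set L : ℤ := (t.length : ℤ) with hL
      have hL0 : 0 ≤ L := Int.ofNat_nonneg _
      intro k
      have hlen : ((h :: t).length : ℤ) = L + 1 := by simp [hL]
      rw [hlen]
      have hmul : (h :: t).prod = h * t.prod := List.prod_cons
      -- general target bound
      have target : ∀ u : ℤ, |u| ≤ (L + 1) * (L + 2) ^ k →
          |u| ≤ (L + 1) * (L + 1 + 1) ^ k := by
        intro u hu; rw [show L + 1 + 1 = L + 2 by ring]; exact hu
      apply target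
      have hlc : lc d ((h :: t).prod) k =
          coordFun d (actA d (toAdd h.right) (toAdd t.prod.left) + toAdd h.left) k := by
        rw [hmul, lc]
        congr 1
        rw [mul_left]
        rw [show toAdd (h.left * act d h.right t.prod.left)
            = toAdd h.left + toAdd (act d h.right t.prod.left) from rfl]
        rw [act_toAdd]
        abel
      rw [hlc]
      have ihz : ∀ k : ℕ, |coordFun d (toAdd t.prod.left) k| ≤ L * (L + 1) ^ k := fun k => ih k
      rcases hl h List.mem_cons_self with hmem | hmem
      · rcases hmem with rfl | ⟨i, rfl⟩
        · -- h = tGen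
          have e1 : toAdd (tGen d).right = (1 : ℤ) := rfl
          have e2 : toAdd (tGen d).left = (0 : Fin d → ℤ) := rfl
          rw [e1, e2, add_zero]
          exact bound_phi_inv d L hL0 _ ihz k
        · -- h = aGen i
          have e1 : toAdd (aGen d i).right = (0 : ℤ) := rfl
          have e2 : toAdd (aGen d i).left = Pi.single i (1 : ℤ) := rfl
          rw [e1, e2, actA_zero]
          exact bound_id d L hL0 _ ihz 1 (by norm_num) i k
      · rcases hmem with heq | ⟨i, heq⟩
        · -- h = tGen⁻¹
          have hh : h = (tGen d)⁻¹ := by rw [← heq, inv_inv]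
          subst hh
          have e1 : toAdd ((tGen d)⁻¹).right = (-1 : ℤ) := rfl
          have e2 : toAdd ((tGen d)⁻¹).left = (0 : Fin d → ℤ) := by
            have : ((tGen d)⁻¹).left = act d ((tGen d).right)⁻¹ ((tGen d).left)⁻¹ :=
              SemidirectProduct.inv_left _
            rw [this, tGen_left, inv_one, map_one]
            rfl
          rw [e1, e2, add_zero, actA_neg_one]
          exact bound_phi d L hL0 _ ihz k
        · -- h = (aGen i)⁻¹
          have hh : h = (aGen d i)⁻¹ := by rw [heq, inv_inv]
          subst hh
          have e1 : toAdd ((aGen d i)⁻¹).right = (0 : ℤ) := rfl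
          have e2 : toAdd ((aGen d i)⁻¹).left = -Pi.single i (1 : ℤ) := by
            have : ((aGen d i)⁻¹).left = act d ((aGen d i).right)⁻¹ ((aGen d i).left)⁻¹ :=
              SemidirectProduct.inv_left _
            rw [this]
            have hr : ((aGen d i).right) = 1 := rfl
            rw [hr, inv_one, map_one]
            rfl
          rw [e1, e2, actA_zero]
          have : toAdd t.prod.left + -Pi.single i (1:ℤ) = toAdd t.prod.left + Pi.single i (-1:ℤ) := by
            rw [← Pi.single_neg]
          rw [this]
          exact bound_id d L hL0 _ ihz (-1) (by norm_num) i k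

open SemidirectProduct Multiplicative

theorem tGen_pow (d : ℕ) (n : ℕ) : (tGen d) ^ n = inr (ofAdd (n : ℤ)) := by
  induction n with
  | zero => simp
  | succ n ih =>
      rw [pow_succ, ih, tGen, ← map_mul]
      congr 1

theorem aGen_zpow (d : ℕ) (i : Fin d) (c : ℤ) :
    (aGen d i) ^ c = inl (ofAdd (Pi.single i c)) := by
  rw [aGen, ← map_zpow]
  congr 1
  rw [← ofAdd_zsmul]
  congr 1
  funext j
  by_cases h : j = i
  · subst h; simp
  · simp [Pi.single_eq_of_ne h]

theorem closure_gens (d : ℕ) : Subgroup.closure (gens d) = ⊤ := by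
  rw [eq_top_iff]
  intro g _
  have hg : g = inl g.left * inr g.right := (inl_left_mul_inr_right g).symm
  rw [hg]
  apply mul_mem
  · have hx : inl g.left = (List.ofFn (fun j : Fin d => (aGen d j) ^ (toAdd g.left j))).prod := by
      have h1 : (fun j : Fin d => (aGen d j) ^ (toAdd g.left j))
          = fun j : Fin d => inl (ofAdd (Pi.single j (toAdd g.left j))) := by
        funext j; exact aGen_zpow d j _
      rw [h1]
      rw [show (fun j : Fin d => (inl (ofAdd (Pi.single j (toAdd g.left j))) : Gamma d))
          = (inl : Multiplicative (Fin d → ℤ) →* Gamma d) ∘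
            (fun j : Fin d => ofAdd (Pi.single j (toAdd g.left j))) from rfl]
      rw [← List.map_ofFn, ← MonoidHom.map_list_prod]
      congr 1
      rw [List.prod_ofFn, ← ofAdd_sum]
      congr 1
      exact (Finset.univ_sum_single (toAdd g.left)).symm
    rw [hx]
    apply Subgroup.list_prod_mem
    intro x hx'
    rw [List.mem_ofFn] at hx'
    obtain ⟨j, rfl⟩ := hx'
    exact zpow_mem (Subgroup.subset_closure (Set.mem_insert_of_mem (tGen d) (Set.mem_range_self j))) _
  · have hy : inr g.right = (tGen d) ^ (toAdd g.right) := by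
      rcases Int.eq_nat_or_neg (toAdd g.right) with ⟨n, hn | hn⟩
      · rw [hn, zpow_natCast, tGen_pow, ← hn, ofAdd_toAdd]
      · rw [hn, zpow_neg, zpow_natCast, tGen_pow, ← map_inv]
        congr 1
    rw [hy]
    exact zpow_mem (Subgroup.subset_closure (Set.mem_insert _ _)) _

theorem wl_le_length (d : ℕ) (l : List (Gamma d))
    (hl : ∀ x ∈ l, x ∈ gens d ∨ x⁻¹ ∈ gens d) : wl d l.prod ≤ l.length :=
  Nat.sInf_le ⟨l, rfl, hl, rfl⟩

theorem exists_word (d : ℕ) (g : Gamma d) :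
    ∃ l : List (Gamma d), l.length = wl d g ∧
      (∀ x ∈ l, x ∈ gens d ∨ x⁻¹ ∈ gens d) ∧ l.prod = g := by
  have hg : g ∈ Subgroup.closure (gens d) := by rw [closure_gens]; trivial
  rw [← Subgroup.mem_toSubmonoid, Subgroup.closure_toSubmonoid] at hg
  obtain ⟨l, hl, hp⟩ := Submonoid.exists_list_of_mem_closure hg
  have hl' : ∀ x ∈ l, x ∈ gens d ∨ x⁻¹ ∈ gens d := by
    intro x hx
    rcases hl x hx with h | h
    · exact Or.inl h
    · exact Or.inr (Set.mem_inv.mp h)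
  have hne : {n | ∃ l : List (Gamma d), l.length = n ∧
      (∀ x ∈ l, x ∈ gens d ∨ x⁻¹ ∈ gens d) ∧ l.prod = g}.Nonempty :=
    ⟨l.length, l, rfl, hl', hp⟩
  obtain ⟨l₀, hlen, hmem, hprod⟩ := Nat.sInf_mem hne
  exact ⟨l₀, hlen, hmem, hprod⟩

theorem coord_bound (d : ℕ) (u : Gamma d) (n : ℕ) (hn : wl d u ≤ n) :
    ∀ k : ℕ, |coordFun d (toAdd u.left) k| ≤ (n : ℤ) * ((n : ℤ) + 1) ^ k := by
  obtain ⟨l, hlen, hmem, hprod⟩ := exists_word d u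
  intro k
  have h1 := word_bound d l hmem k
  rw [hprod] at h1
  have hL : (l.length : ℤ) ≤ (n : ℤ) := by exact_mod_cast hlen ▸ hn
  have hL0 : (0 : ℤ) ≤ (l.length : ℤ) := Int.ofNat_nonneg _
  have mono : (l.length : ℤ) * ((l.length : ℤ) + 1) ^ k ≤ (n : ℤ) * ((n : ℤ) + 1) ^ k := by
    gcongr <;> linarith
  exact le_trans h1 mono

theorem wl_one (d : ℕ) : wl d (1 : Gamma d) = 0 :=
  Nat.le_zero.mp (Nat.sInf_le ⟨[], rfl, by simp, rfl⟩)

theorem wl_inr (d : ℕ) (m : ℤ) :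
    wl d (inr (ofAdd m) : Gamma d) ≤ m.natAbs := by
  rcases le_or_gt 0 m with hm | hm
  · have h1 : (inr (ofAdd m) : Gamma d) = (List.replicate m.natAbs (tGen d)).prod := by
      rw [List.prod_replicate, tGen_pow]
      congr 1
      rw [Int.natAbs_of_nonneg hm]
    rw [h1]
    have := wl_le_length d (List.replicate m.natAbs (tGen d)) (by
      intro x hx
      rw [List.eq_of_mem_replicate hx]
      exact Or.inl (Set.mem_insert _ _))
    simpa using this
  · have h1 : (inr (ofAdd m) : Gamma d) = (List.replicate m.natAbs (tGen d)⁻¹).prod := by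
      rw [List.prod_replicate, inv_pow, tGen_pow, ← map_inv]
      congr 1
      rw [← ofAdd_neg]
      congr 1
      omega
    rw [h1]
    have := wl_le_length d (List.replicate m.natAbs (tGen d)⁻¹) (by
      intro x hx
      rw [List.eq_of_mem_replicate hx]
      exact Or.inr (by rw [inv_inv]; exact Set.mem_insert _ _))
    simpa using this

theorem A_le_range (d : ℕ) :
    A d ≤ (inl : Multiplicative (Fin d → ℤ) →* Gamma d).range :=
  (Subgroup.closure_le _).mpr (by rintro g ⟨i, rfl⟩; exact ⟨_, rfl⟩)

theorem conj_inl (d : ℕ) (c : Gamma d) (X : Multiplicative (Fin d → ℤ)) :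
    c * inl X * c⁻¹ = inl (act d c.right X) := by
  have hL : (c * inl X * c⁻¹).left = act d c.right X := by
    rw [mul_left, mul_left, inv_left, mul_right, right_inl, mul_one, left_inl]
    rw [← MulAut.mul_apply, ← map_mul, mul_inv_cancel, map_one, MulAut.one_apply]
    rw [mul_comm c.left, mul_assoc, mul_inv_cancel, mul_one]
  have hR : (c * inl X * c⁻¹).right = 1 := by
    rw [mul_right, mul_right, inv_right, right_inl, mul_one, mul_inv_cancel]
  exact SemidirectProduct.ext hL (by rw [hR, right_inl])

theorem conj_inr (d : ℕ) (r : Multiplicative ℤ) (X : Multiplicative (Fin d → ℤ)) :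
    ((inr r : Gamma d))⁻¹ * inl X * inr r = inl (act d r⁻¹ X) := by
  have := conj_inl d ((inr r)⁻¹ : Gamma d) X
  rw [inv_inv] at this
  rw [show ((inr r)⁻¹ : Gamma d).right = r⁻¹ by rw [inv_right, right_inr]] at this
  exact this

open SemidirectProduct Multiplicative


/-- Lemma 7.2: Proposition 7.1 holds for elements of `A_d = ℤ^d ⋊ 1 < Γ_d`: conjugate
elements `u, v ∈ A_d` of the `n`-ball admit a conjugator of length at most `B n^d`. -/
theorem short_conjugators_in_A (d : ℕ) (hd : 1 ≤ d) :
    ∃ B : ℕ, 0 < B ∧ ∀ n : ℕ, 1 ≤ n → ∀ u v : Gamma d, u ∈ A d → v ∈ A d →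
      IsConj u v → wl d u ≤ n → wl d v ≤ n →
      ∃ g : Gamma d, g⁻¹ * u * g = v ∧ wl d g ≤ B * n ^ d := by
  refine ⟨2 ^ d, Nat.pow_pos (by norm_num), ?_⟩
  intro n hn u v hu hv hconj hun hvn
  obtain ⟨X, rfl⟩ := A_le_range d hu
  obtain ⟨c, hc⟩ := isConj_iff.mp hconj
  have hv' : inl (act d c.right X) = v := by rw [← conj_inl]; exact hc
  set x : Fin d → ℤ := toAdd X with hx
  set m : ℤ := toAdd c.right with hm
  have hcr : c.right = ofAdd m := rfl
  by_cases hfix : ∀ k, k < d - 1 → coordFun d x k = 0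
  · -- `x` is fixed by `φ`, so `v = u`.
    have hphi : phiFun d x = x := by
      funext j
      rw [show phiFun d x j = x j + shiftMap d x j from rfl, shiftMap_apply]
      by_cases h : 1 ≤ (j : ℕ)
      · rw [dif_pos h]
        have hj : (j : ℕ) - 1 < d - 1 := by omega
        have := hfix ((j : ℕ) - 1) hj
        rw [show coordFun d x ((j:ℕ)-1) = x ⟨(j:ℕ)-1, by omega⟩ from dif_pos (by omega)] at this
        rw [this]; ring
      · rw [dif_neg h]; ring
    have hact : act d c.right X = X := by
      have h1 : toAdd (act d c.right X) = actA d m x := by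
        rw [hcr]; rw [act_toAdd]; rfl
      have h2 := actA_fixed d x hphi m
      have : toAdd (act d c.right X) = toAdd X := by rw [h1, h2]
      exact toAdd.injective this
    refine ⟨1, ?_, ?_⟩
    · rw [inv_one, mul_one, one_mul, ← hv', hact]
    · rw [wl_one]; exact Nat.zero_le _
  · push_neg at hfix
    obtain ⟨k0, hk0, hk0ne⟩ := hfix
    have hex : ∃ k, coordFun d x k ≠ 0 := ⟨k0, hk0ne⟩
    set j0 := Nat.find hex with hj0
    have hj0le : j0 ≤ k0 := Nat.find_min' hex hk0ne
    have hj0d : j0 + 1 < d := by omega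
    have h0 : ∀ k < j0, coordFun d x k = 0 := fun k hk => by
      by_contra hne
      exact absurd (Nat.find_min' hex hne) (by omega)
    have hc0 : coordFun d x j0 ≠ 0 := Nat.find_spec hex
    set y : Fin d → ℤ := actA d m x with hy
    have hyv : toAdd v.left = y := by
      rw [← hv', left_inl, hcr, act_toAdd]
      rfl
    obtain ⟨q0, qc, qe⟩ := actA_Q d j0 hj0d x h0 m
    -- coordinate bounds
    have hxb := coord_bound d (inl X) n hun
    have hyb := coord_bound d v n hvn
    rw [show (inl X : Gamma d).left = X from rfl] at hxb
    rw [hyv] at hyb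
    -- numeric bound for |m|
    have hnI : (1 : ℤ) ≤ (n : ℤ) := by exact_mod_cast hn
    have hb1 : |coordFun d x (j0+1)| ≤ (n:ℤ) * ((n:ℤ)+1) ^ (j0+1) := hxb (j0+1)
    have hb2 : |coordFun d y (j0+1)| ≤ (n:ℤ) * ((n:ℤ)+1) ^ (j0+1) := hyb (j0+1)
    have hpow1 : ((n:ℤ)+1) ^ (j0+1) ≤ ((n:ℤ)+1) ^ (d-1) :=
      pow_le_pow_right₀ (by linarith) (by omega)
    have hpow2 : ((n:ℤ)+1) ^ (d-1) ≤ (2*(n:ℤ)) ^ (d-1) :=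
      pow_le_pow_left₀ (by linarith) (by linarith) _
    have hsplit : (2*(n:ℤ)) ^ (d-1) = 2 ^ (d-1) * (n:ℤ) ^ (d-1) := mul_pow _ _ _
    have hnd : (n:ℤ) * (n:ℤ) ^ (d-1) = (n:ℤ) ^ d := by
      rw [← pow_succ']
      congr 1
      omega
    have h2d : (2:ℤ) * 2 ^ (d-1) = 2 ^ d := by
      rw [← pow_succ']
      congr 1
      omega
    have hmabs : |m| * |coordFun d x j0| ≤ 2 * ((n:ℤ) * ((n:ℤ)+1) ^ (j0+1)) := by
      rw [← abs_mul]
      have : m * coordFun d x j0 = coordFun d x (j0+1) - coordFun d y (j0+1) := by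
        rw [qe]; ring
      rw [this]
      calc |coordFun d x (j0+1) - coordFun d y (j0+1)|
          ≤ |coordFun d x (j0+1)| + |coordFun d y (j0+1)| := abs_sub _ _
        _ ≤ 2 * ((n:ℤ) * ((n:ℤ)+1) ^ (j0+1)) := by linarith
    have hone : (1:ℤ) ≤ |coordFun d x j0| := Int.one_le_abs (by exact hc0)
    have hmle : |m| ≤ 2 ^ d * (n:ℤ) ^ d := by
      have hmnn : (0:ℤ) ≤ |m| := abs_nonneg m
      have step1 : |m| ≤ 2 * ((n:ℤ) * ((n:ℤ)+1) ^ (j0+1)) := by nlinarith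
      have hn0 : (0:ℤ) ≤ (n:ℤ) := by linarith
      have step2 : (n:ℤ) * ((n:ℤ)+1) ^ (j0+1) ≤ (n:ℤ) * (2 ^ (d-1) * (n:ℤ) ^ (d-1)) := by
        rw [← hsplit]
        have := le_trans hpow1 hpow2
        nlinarith
      have step3 : (n:ℤ) * (2 ^ (d-1) * (n:ℤ) ^ (d-1)) = 2 ^ (d-1) * (n:ℤ) ^ d := by
        rw [← hnd]; ring
      have step4 : 2 * (2 ^ (d-1) * (n:ℤ) ^ d) = 2 ^ d * (n:ℤ) ^ d := by
        rw [← h2d]; ring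
      linarith
    -- the conjugator
    refine ⟨inr (c.right)⁻¹, ?_, ?_⟩
    · have := conj_inr d (c.right)⁻¹ X
      rw [inv_inv] at this
      rw [this, hv']
    · have hg : (inr (c.right)⁻¹ : Gamma d) = inr (ofAdd (-m)) := by
        rw [hcr, ← ofAdd_neg]
      rw [hg]
      refine le_trans (wl_inr d (-m)) ?_
      have : ((-m).natAbs : ℤ) ≤ ((2 ^ d * n ^ d : ℕ) : ℤ) := by
        push_cast
        rw [abs_neg]
        exact hmle
      exact_mod_cast this

end ModelFiliform
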